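/- arXiv:0705.2391 — 9 statements merged into one kernel-verified Lean document; each statement's English description precedes it below -/
import Mathlib

section
/- There are exactly 23 integer triples (x, y, z) with x + y + z = 1 satisfying: (−4t₁ + 22)/5, (t₁ + 22)/5, (4t₂ + 77)/5, (−t₂ + 77)/5, (24x − 16y + 4z + 56)/5, (28x + 8y − 12z + 132)/5, and (−4x + 16y − 4z + 49)/5 are all non-negative integers, where t₁ = 3x − 2y − 2z and t₂ = 2x − 3y + 2z; namely the 23 triples (−2,−1,4), (−1,−1,3), (0,−1,2), (1,−1,1), (1,3,−3), (0,3,−2), (−3,0,4), (−2,0,3), (1,0,0), (1,4,−4), (−1,0,2), (0,0,1), (0,2,−1), (−1,2,0), (1,2,−2), (0,1,0), (−2,−2,5), (−1,−2,4), (0,−2,3), (1,−2,2), (1,1,−1), (−2,1,2), (−1,1,1). -/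
/-!
Eliminating `z = 1 - x - y`, each of the seven quantities becomes `5` times a linear form in
`x, y` (for instance `t₁ = 5x - 2` and `t₂ = 2 - 5y`), so divisibility by `5` is automatic and
the conditions only say that these linear forms are non-negative. They cut out the lattice
polygon `x ≤ 1`, `-2 ≤ y ≤ 4`, `y ≤ x + 3`, `-6 ≤ 2x + y`, which has exactly 23 points.
-/

/-- Each expression is `5` times a Luthar–Passi multiplicity `μ(ξ, u, χ)`. -/
def LutharPassiConditions (x y z : ℤ) : Prop :=
  ((5:ℤ) ∣ (-4*(3*x - 2*y - 2*z) + 22) ∧ 0 ≤ (-4*(3*x - 2*y - 2*z) + 22)) ∧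
  ((5:ℤ) ∣ ((3*x - 2*y - 2*z) + 22) ∧ 0 ≤ ((3*x - 2*y - 2*z) + 22)) ∧
  ((5:ℤ) ∣ (4*(2*x - 3*y + 2*z) + 77) ∧ 0 ≤ (4*(2*x - 3*y + 2*z) + 77)) ∧
  ((5:ℤ) ∣ (-(2*x - 3*y + 2*z) + 77) ∧ 0 ≤ (-(2*x - 3*y + 2*z) + 77)) ∧
  ((5:ℤ) ∣ (24*x - 16*y + 4*z + 56) ∧ 0 ≤ (24*x - 16*y + 4*z + 56)) ∧
  ((5:ℤ) ∣ (28*x + 8*y - 12*z + 132) ∧ 0 ≤ (28*x + 8*y - 12*z + 132)) ∧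
  ((5:ℤ) ∣ (-4*x + 16*y - 4*z + 49) ∧ 0 ≤ (-4*x + 16*y - 4*z + 49))

lemma Int.dvd_mul_right_and_nonneg_iff {n : ℤ} (hn : 0 < n) (a : ℤ) :
    n ∣ n * a ∧ 0 ≤ n * a ↔ 0 ≤ a :=
  ⟨fun h => nonneg_of_mul_nonneg_right h.2 hn, fun h => ⟨dvd_mul_right n a, mul_nonneg hn.le h⟩⟩

lemma lutharPassiConditions_iff {x y z : ℤ} (h : x + y + z = 1) :
    LutharPassiConditions x y z ↔ x ≤ 1 ∧ -2 ≤ y ∧ y ≤ 4 ∧ y ≤ x + 3 ∧ -6 ≤ 2 * x + y := by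
  obtain rfl : z = 1 - x - y := by omega
  have e₁ : -4*(3*x - 2*y - 2*(1 - x - y)) + 22 = 5 * (6 - 4*x) := by ring
  have e₂ : (3*x - 2*y - 2*(1 - x - y)) + 22 = 5 * (x + 4) := by ring
  have e₃ : 4*(2*x - 3*y + 2*(1 - x - y)) + 77 = 5 * (17 - 4*y) := by ring
  have e₄ : -(2*x - 3*y + 2*(1 - x - y)) + 77 = 5 * (y + 15) := by ring
  have e₅ : 24*x - 16*y + 4*(1 - x - y) + 56 = 5 * (4 * (x - y + 3)) := by ring
  have e₆ : 28*x + 8*y - 12*(1 - x - y) + 132 = 5 * (4 * (2*x + y + 6)) := by ring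
  have e₇ : -4*x + 16*y - 4*(1 - x - y) + 49 = 5 * (4*y + 9) := by ring
  rw [LutharPassiConditions, e₁, e₂, e₃, e₄, e₅, e₆, e₇]
  simp only [Int.dvd_mul_right_and_nonneg_iff (by norm_num : (0:ℤ) < 5)]
  omega

theorem stmt1 :
    {t : ℤ × ℤ × ℤ | t.1 + t.2.1 + t.2.2 = 1 ∧
      (let x := t.1; let y := t.2.1; let z := t.2.2;
      ((5:ℤ) ∣ (-4*(3*x - 2*y - 2*z) + 22) ∧ 0 ≤ (-4*(3*x - 2*y - 2*z) + 22)) ∧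
      ((5:ℤ) ∣ ((3*x - 2*y - 2*z) + 22) ∧ 0 ≤ ((3*x - 2*y - 2*z) + 22)) ∧
      ((5:ℤ) ∣ (4*(2*x - 3*y + 2*z) + 77) ∧ 0 ≤ (4*(2*x - 3*y + 2*z) + 77)) ∧
      ((5:ℤ) ∣ (-(2*x - 3*y + 2*z) + 77) ∧ 0 ≤ (-(2*x - 3*y + 2*z) + 77)) ∧
      ((5:ℤ) ∣ (24*x - 16*y + 4*z + 56) ∧ 0 ≤ (24*x - 16*y + 4*z + 56)) ∧
      ((5:ℤ) ∣ (28*x + 8*y - 12*z + 132) ∧ 0 ≤ (28*x + 8*y - 12*z + 132)) ∧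
      ((5:ℤ) ∣ (-4*x + 16*y - 4*z + 49) ∧ 0 ≤ (-4*x + 16*y - 4*z + 49)))} =
    {(-2,-1,4), (-1,-1,3), (0,-1,2), (1,-1,1), (1,3,-3), (0,3,-2), (-3,0,4), (-2,0,3), (1,0,0), (1,4,-4), (-1,0,2), (0,0,1), (0,2,-1), (-1,2,0), (1,2,-2), (0,1,0), (-2,-2,5), (-1,-2,4), (0,-2,3), (1,-2,2), (1,1,-1), (-2,1,2), (-1,1,1)} := by
  ext ⟨x, y, z⟩
  simp only [Set.mem_ofPred_eq, Set.mem_insert_iff, Set.mem_singleton_iff, Prod.mk.injEq]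
  constructor
  · rintro ⟨hsum, hconds⟩
    obtain ⟨hx, hy₀, hy₁, hxy, hxy'⟩ := (lutharPassiConditions_iff hsum).1 hconds
    obtain rfl : z = 1 - x - y := by omega
    have hx₀ : -3 ≤ x := by omega
    interval_cases x <;> interval_cases y <;> first | (exfalso; omega) | simp
  · intro hmem
    have hsum : x + y + z = 1 := by omega
    exact ⟨hsum, (lutharPassiConditions_iff hsum).2 (by omega)⟩
end

section
/- The set of integer pairs (x, y) with x + y = 1 such that (6x − 5y + 896)/11, (−5x + 6y + 896)/11, (6x − 5y + 49)/11, (−5x + 6y + 49)/11, (6x − 5y + 280)/11, and (−5x + 6y + 280)/11 are all non-negative integers is exactly {(5,−4), (4,−3), (−2,3), (2,−1), (−3,4), (−4,5), (1,0), (3,−2), (−1,2), (0,1)}. -/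
/-!
On the line `x + y = 1` we have `6x - 5y = 11x - 5` and `-5x + 6y = 6 - 11x`. Every degree
`d` occurring here is `11k + 5`, so the two Luthar–Passi numerators attached to `d` are
`11(x + k)` and `11(k + 1 - x)`: they are always divisible by `11`, and they are non-negative
exactly when `-k ≤ x ≤ k + 1`. The degree `49 = 11 * 4 + 5` gives the sharpest window
`-4 ≤ x ≤ 5`.
-/

-- `x`, `y` are the partial augmentations at `11a`, `11b` and `d` is the character degree.
def LutharPassiAdmissible (d x y : ℤ) : Prop :=
  ((11:ℤ) ∣ (6*x - 5*y + d) ∧ 0 ≤ (6*x - 5*y + d)) ∧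
    ((11:ℤ) ∣ (-5*x + 6*y + d) ∧ 0 ≤ (-5*x + 6*y + d))

theorem lutharPassiAdmissible_iff {d k x y : ℤ} (hd : d = 11 * k + 5) (h : x + y = 1) :
    LutharPassiAdmissible d x y ↔ -k ≤ x ∧ x ≤ k + 1 := by
  obtain rfl : y = 1 - x := by omega
  subst hd
  unfold LutharPassiAdmissible
  omega

theorem mem_solutions_iff {x y : ℤ} :
    (x, y) ∈ ({(5,-4), (4,-3), (-2,3), (2,-1), (-3,4), (-4,5), (1,0), (3,-2), (-1,2), (0,1)} :
      Set (ℤ × ℤ)) ↔ x + y = 1 ∧ -4 ≤ x ∧ x ≤ 5 := by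
  simp only [Set.mem_insert_iff, Set.mem_singleton_iff, Prod.mk.injEq]
  omega

theorem stmt2 :
    {p : ℤ × ℤ | p.1 + p.2 = 1 ∧ ((11:ℤ) ∣ (6*p.1 - 5*p.2 + 896) ∧ 0 ≤ (6*p.1 - 5*p.2 + 896)) ∧ ((11:ℤ) ∣ (-5*p.1 + 6*p.2 + 896) ∧ 0 ≤ (-5*p.1 + 6*p.2 + 896)) ∧ ((11:ℤ) ∣ (6*p.1 - 5*p.2 + 49) ∧ 0 ≤ (6*p.1 - 5*p.2 + 49)) ∧ ((11:ℤ) ∣ (-5*p.1 + 6*p.2 + 49) ∧ 0 ≤ (-5*p.1 + 6*p.2 + 49)) ∧ ((11:ℤ) ∣ (6*p.1 - 5*p.2 + 280) ∧ 0 ≤ (6*p.1 - 5*p.2 + 280)) ∧ ((11:ℤ) ∣ (-5*p.1 + 6*p.2 + 280) ∧ 0 ≤ (-5*p.1 + 6*p.2 + 280))} =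
    {(5,-4), (4,-3), (-2,3), (2,-1), (-3,4), (-4,5), (1,0), (3,-2), (-1,2), (0,1)} := by
  ext ⟨x, y⟩
  rw [mem_solutions_iff]
  calc
    _ ↔ x + y = 1 ∧ LutharPassiAdmissible 896 x y ∧ LutharPassiAdmissible 49 x y ∧
        LutharPassiAdmissible 280 x y := by
      simp only [Set.mem_ofPred_eq, LutharPassiAdmissible, and_assoc]
    _ ↔ _ := and_congr_right fun h => by
      rw [lutharPassiAdmissible_iff (d := 896) (k := 81) rfl h,
        lutharPassiAdmissible_iff (d := 49) (k := 4) rfl h,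
        lutharPassiAdmissible_iff (d := 280) (k := 25) rfl h]
      omega
end

section
/- There are no integers x, y with x + y = 1 such that (48x + 12y + 36)/21, (−24x − 6y + 24)/21, and (5x + 72)/21 are all non-negative integers. -/
theorem stmt3 : ¬ ∃ x y : ℤ, x + y = 1 ∧ ((21:ℤ) ∣ (48*x + 12*y + 36) ∧ 0 ≤ (48*x + 12*y + 36)) ∧ ((21:ℤ) ∣ (-24*x - 6*y + 24) ∧ 0 ≤ (-24*x - 6*y + 24)) ∧ ((21:ℤ) ∣ (5*x + 72) ∧ 0 ≤ (5*x + 72)) := by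
  rintro ⟨x, y, hxy, ⟨-, hχ₂⟩, ⟨-, hχ₃⟩, hdvd, -⟩
  obtain rfl : y = 1 - x := by linarith
  have hlower : -1 ≤ x := by linarith
  have hupper : x ≤ 1 := by linarith
  -- 5x + 72 ∈ {67, 72, 77}, and none of these is a multiple of 21.
  interval_cases x <;> norm_num at hdvd
end

section
/- For each pair (γ, δ) in {(854,950), (843,939), (898,994), (821,917), (865,961), (810,906), (799,895), (876,972), (832,928), (887,983)}, there are no integers a, b, c, d with a + b + c + d = 1 such that (20t₁+4)/22, (−2t₁+4)/22, (10t₂+54)/22, (−10t₂+100)/22, (t₃+γ)/22, and (−t₃+δ)/22 are all non-negative integers, where t₁ = 3a − b, t₂ = 13a + b, t₃ = 16b + 5c − 6d. -/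
/-!
The conditions on `t₁ = 3a - b` and `t₂ = 13a + b` alone are already inconsistent: they force
`t₁ = 2` and `t₂ ∈ {-1, 10}`, whereas `t₁ + t₂ = 16a` must be divisible by `16`.
-/

lemma eq_two_of_dvd_of_bounds {t : ℤ} (hlow : 0 ≤ 20 * t + 4)
    (hdvd : (22 : ℤ) ∣ -2 * t + 4) (hupp : 0 ≤ -2 * t + 4) : t = 2 := by
  omega

lemma eq_neg_one_or_eq_ten_of_dvd_of_bounds {t : ℤ}
    (hdvd : (22 : ℤ) ∣ 10 * t + 54) (hlow : 0 ≤ 10 * t + 54) (hupp : 0 ≤ -10 * t + 100) :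
    t = -1 ∨ t = 10 := by
  omega

theorem stmt12 :
    ∀ p : ℤ × ℤ, p ∈ [((854:ℤ), (950:ℤ)), ((843:ℤ), (939:ℤ)), ((898:ℤ), (994:ℤ)), ((821:ℤ), (917:ℤ)), ((865:ℤ), (961:ℤ)), ((810:ℤ), (906:ℤ)), ((799:ℤ), (895:ℤ)), ((876:ℤ), (972:ℤ)), ((832:ℤ), (928:ℤ)), ((887:ℤ), (983:ℤ))] →
      ¬ ∃ a b c d : ℤ, a + b + c + d = 1 ∧ ((22:ℤ) ∣ (20*(3*a - b) + 4) ∧ 0 ≤ (20*(3*a - b) + 4)) ∧ ((22:ℤ) ∣ (-2*(3*a - b) + 4) ∧ 0 ≤ (-2*(3*a - b) + 4)) ∧ ((22:ℤ) ∣ (10*(13*a + b) + 54) ∧ 0 ≤ (10*(13*a + b) + 54)) ∧ ((22:ℤ) ∣ (-10*(13*a + b) + 100) ∧ 0 ≤ (-10*(13*a + b) + 100)) ∧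
        ((22:ℤ) ∣ ((16*b + 5*c - 6*d) + p.1) ∧ 0 ≤ ((16*b + 5*c - 6*d) + p.1)) ∧ ((22:ℤ) ∣ (-(16*b + 5*c - 6*d) + p.2) ∧ 0 ≤ (-(16*b + 5*c - 6*d) + p.2)) := by
  rintro p -
  rintro ⟨a, b, c, d, -, ⟨-, ht₁_low⟩, ⟨ht₁_dvd, ht₁_upp⟩, ⟨ht₂_dvd, ht₂_low⟩, ⟨-, ht₂_upp⟩, -⟩
  have ht₁ : 3 * a - b = 2 := eq_two_of_dvd_of_bounds ht₁_low ht₁_dvd ht₁_upp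
  have ht₂ : 13 * a + b = -1 ∨ 13 * a + b = 10 :=
    eq_neg_one_or_eq_ten_of_dvd_of_bounds ht₂_dvd ht₂_low ht₂_upp
  rcases ht₂ with ht₂ | ht₂ <;> omega
end

section
/- There are no integers x, y, z, w with x + y + z + w = 1 such that (12x − 8y − 8z − 4w + 9)/35 and (−6(12x − 8y − 8z − 4w) + 16)/35 are both non-negative integers. -/
/-! Write `S = 12x - 8y - 8z - 4w`. The two sign conditions give `0 ≤ S + 9 ≤ 11`, so `35 ∣ S + 9`
forces `S = -9`; but on the hyperplane `x + y + z + w = 1` we have `S = 4 (5x + w - 2)`. -/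

theorem stmt14 : ¬ ∃ x y z w : ℤ, x + y + z + w = 1 ∧ ((35:ℤ) ∣ (12*x - 8*y - 8*z - 4*w + 9) ∧ 0 ≤ (12*x - 8*y - 8*z - 4*w + 9)) ∧ ((35:ℤ) ∣ (-6*(12*x - 8*y - 8*z - 4*w) + 16) ∧ 0 ≤ (-6*(12*x - 8*y - 8*z - 4*w) + 16)) := by
  rintro ⟨x, y, z, w, hsum, ⟨hdvd, hnonneg⟩, -, hnonneg'⟩
  set S := 12*x - 8*y - 8*z - 4*w with hS
  have hS_eq : S + 9 = 0 := Int.eq_zero_of_dvd_of_nonneg_of_lt hnonneg (by omega) hdvd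
  have hS_dvd : (4:ℤ) ∣ S := ⟨5*x + w - 2, by linear_combination (-8:ℤ) * hsum⟩
  omega
end

section
/- There are no integers x, y, z, w with x + y + z + w = 1 such that (18x − 12y − 12z − 6w + 26)/35 and (−72x + 48y + 48z + 24w + 36)/35 are both non-negative integers. -/
/-! The second numerator equals `140 - 4·A`, where `A` is the first one, so both are
non-negative multiples of `35` only when `A ∈ {0, 35}`. But `x + y + z + w = 1` gives
`A = 6 (5x + w + 2) + 2 ≡ 2 (mod 6)`, while `0` and `35` are `0` and `5` modulo `6`. -/

theorem stmt15 : ¬ ∃ x y z w : ℤ, x + y + z + w = 1 ∧ ((35:ℤ) ∣ (18*x - 12*y - 12*z - 6*w + 26) ∧ 0 ≤ (18*x - 12*y - 12*z - 6*w + 26)) ∧ ((35:ℤ) ∣ (-72*x + 48*y + 48*z + 24*w + 36) ∧ 0 ≤ (-72*x + 48*y + 48*z + 24*w + 36)) := by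
  rintro ⟨x, y, z, w, hsum, ⟨⟨a, ha⟩, hA⟩, ⟨b, hb⟩, hB⟩
  have hab : 35 * b = 140 - 4 * (35 * a) := by rw [← ha, ← hb]; ring
  have ha01 : a = 0 ∨ a = 1 := by omega
  have hA_mod : 35 * a = 6 * (5 * x + w + 2) + 2 := by rw [← ha]; linear_combination -12 * hsum
  rcases ha01 with rfl | rfl <;> omega
end

section
/- There are no integers x, y, z, w with x + y + z + w = 1 such that (18x − 12y − 12z − 6w + 16)/35 and (−72x + 48y + 48z + 24w + 76)/35 are both non-negative integers. -/
/- Write `a` for the first numerator. The second numerator is `140 - 4a`, so both being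
non-negative multiples of 35 forces `a ∈ {0, 35}`. But eliminating `y + z` with the
constraint gives `a = 30x + 6w + 4 ≡ 4 [ZMOD 6]`, which neither 0 nor 35 satisfies. -/
theorem stmt16 : ¬ ∃ x y z w : ℤ, x + y + z + w = 1 ∧ ((35:ℤ) ∣ (18*x - 12*y - 12*z - 6*w + 16) ∧ 0 ≤ (18*x - 12*y - 12*z - 6*w + 16)) ∧ ((35:ℤ) ∣ (-72*x + 48*y + 48*z + 24*w + 76) ∧ 0 ≤ (-72*x + 48*y + 48*z + 24*w + 76)) := by
  rintro ⟨x, y, z, w, hsum, ⟨ha_dvd, ha_nonneg⟩, -, hb_nonneg⟩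
  set a := 18*x - 12*y - 12*z - 6*w + 16 with ha
  have hb : -72*x + 48*y + 48*z + 24*w + 76 = 140 - 4 * a := by rw [ha]; ring
  have ha_le : a ≤ 35 := by omega
  have ha_cases : a = 0 ∨ a = 35 := by omega
  have ha_mod : a % 6 = 4 := by
    have : a = 30*x + 6*w + 4 := by linear_combination ha - 12 * hsum
    omega
  rcases ha_cases with h | h <;> omega
end

section
/- There are no integers x, y, z, w with x + y + z + w = 1 such that (18x − 12y − 12z − 6w + 21)/35 and (−72x + 48y + 48z + 24w + 56)/35 are both non-negative integers. -/
theorem stmt17 : ¬ ∃ x y z w : ℤ, x + y + z + w = 1 ∧ ((35:ℤ) ∣ (18*x - 12*y - 12*z - 6*w + 21) ∧ 0 ≤ (18*x - 12*y - 12*z - 6*w + 21)) ∧ ((35:ℤ) ∣ (-72*x + 48*y + 48*z + 24*w + 56) ∧ 0 ≤ (-72*x + 48*y + 48*z + 24*w + 56)) := by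
  rintro ⟨x, y, z, w, hsum, ⟨⟨a, ha⟩, hnonneg⟩, -, hnonneg'⟩
  have hodd_mul_three : 18*x - 12*y - 12*z - 6*w + 21 = 3 * (2 * (5*x + w + 1) + 1) := by
    linear_combination (-12) * hsum
  -- The second numerator is 140 minus four times the first.
  have hle : 18*x - 12*y - 12*z - 6*w + 21 ≤ 35 := by linarith
  -- So the first numerator is 0 or 35, neither of which is an odd multiple of 3.
  omega
end

section
/- There are no integers x, y, z with (48x − 72y + 48z + 85)/35 and (−12x + 18y − 12z + 75)/35 both non-negative integers. -/
theorem stmt18 : ¬ ∃ x y z : ℤ, ((35:ℤ) ∣ (48*x - 72*y + 48*z + 85) ∧ 0 ≤ (48*x - 72*y + 48*z + 85)) ∧ ((35:ℤ) ∣ (-12*x + 18*y - 12*z + 75) ∧ 0 ≤ (-12*x + 18*y - 12*z + 75)) := by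
  rintro ⟨x, y, z, ⟨⟨a, ha⟩, ha_nonneg⟩, ⟨b, hb⟩, hb_nonneg⟩
  -- The first numerator plus four times the second is 385 = 35 · 11, free of x, y, z.
  have hab : a + 4 * b = 11 := by linarith
  have hb_range : 0 ≤ b ∧ b ≤ 2 := by omega
  -- The second numerator is 75 - 6 (2x - 3y + 2z), so 35 b ≡ 75 (mod 6).
  have hb_mod : b % 6 = 3 := by omega
  omega
end
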